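/- arXiv:2308.15814 — 3 statements merged into one kernel-verified Lean document; each statement's English description precedes it below -/
import Mathlib

section
/- For all complex numbers z and z', one has |Im((z·log|z|² − z'·log|z'|²)·(conj(z) − conj(z')))| ≤ 4·|z − z'|², with the convention that w·log|w|² = 0 when w = 0. -/
open Complex in
lemma aux_log_lip (z z' : ℂ) (h : ‖z'‖ ≤ ‖z‖) :
    |Real.log (‖z'‖ ^ 2) - Real.log (‖z‖ ^ 2)| *
      |(z * starRingEnd ℂ z').im| ≤ 4 * ‖z - z'‖ ^ 2 := by
  rcases eq_or_ne z' 0 with rfl | hz'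
  · simp
  have hz'pos : 0 < ‖z'‖ := norm_pos_iff.mpr hz'
  have hzpos : 0 < ‖z‖ := lt_of_lt_of_le hz'pos h
  have hlog : Real.log (‖z'‖) ≤ Real.log (‖z‖) :=
    Real.log_le_log hz'pos h
  have h1 : |Real.log (‖z'‖ ^ 2) - Real.log (‖z‖ ^ 2)| =
      2 * (Real.log (‖z‖) - Real.log (‖z'‖)) := by
    rw [Real.log_pow, Real.log_pow, abs_sub_comm,
      _root_.abs_of_nonneg (by push_cast; linarith)]
    push_cast; ring
  have h2 : Real.log (‖z‖) - Real.log (‖z'‖) ≤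
      (‖z‖ - ‖z'‖) / ‖z'‖ := by
    have := Real.log_le_sub_one_of_pos (x := ‖z‖ / ‖z'‖)
      (by positivity)
    rw [Real.log_div hzpos.ne' hz'pos.ne'] at this
    have : Real.log (‖z‖) - Real.log (‖z'‖) ≤
        ‖z‖ / ‖z'‖ - 1 := this
    rw [div_sub_one hz'pos.ne'] at this
    exact this
  have h3 : |(z * starRingEnd ℂ z').im| ≤ ‖z - z'‖ * ‖z'‖ := by
    have heq : (z * starRingEnd ℂ z').im = ((z - z') * starRingEnd ℂ z').im := by
      simp [Complex.mul_im, Complex.sub_re, Complex.sub_im]; ring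
    rw [heq]
    calc |((z - z') * starRingEnd ℂ z').im| ≤ ‖(z - z') * starRingEnd ℂ z'‖ :=
          Complex.abs_im_le_norm _
      _ = ‖z - z'‖ * ‖z'‖ := by
          rw [norm_mul, Complex.norm_conj]
  have h4 : ‖z‖ - ‖z'‖ ≤ ‖z - z'‖ := by
    exact norm_sub_norm_le z z'
  rw [h1]
  calc 2 * (Real.log (‖z‖) - Real.log (‖z'‖)) * |(z * starRingEnd ℂ z').im|
      ≤ 2 * ((‖z‖ - ‖z'‖) / ‖z'‖) *
        (‖z - z'‖ * ‖z'‖) := by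
        apply mul_le_mul (by linarith) h3 (abs_nonneg _)
        exact mul_nonneg (by norm_num) (div_nonneg (by linarith) hz'pos.le)
    _ = 2 * (‖z‖ - ‖z'‖) * ‖z - z'‖ := by
        field_simp
    _ ≤ 2 * ‖z - z'‖ * ‖z - z'‖ := by
        have := norm_nonneg (z - z')
        nlinarith
    _ ≤ 4 * ‖z - z'‖ ^ 2 := by nlinarith [norm_nonneg (z - z')]

open Complex in
theorem log_nonlinearity_lipschitz_im
    (f : ℂ → ℂ) (hf : ∀ w : ℂ, f w = if w = 0 then 0 else w * Real.log (‖w‖ ^ 2))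
    (z z' : ℂ) :
    |((f z - f z') * (starRingEnd ℂ z - starRingEnd ℂ z')).im| ≤
      4 * ‖z - z'‖ ^ 2 := by
  set a := Real.log (‖z‖ ^ 2) with ha
  set b := Real.log (‖z'‖ ^ 2) with hb
  have hfz : f z = z * (a : ℂ) := by
    rw [hf]; split_ifs with h
    · simp [h]
    · rfl
  have hfz' : f z' = z' * (b : ℂ) := by
    rw [hf]; split_ifs with h
    · simp [h]
    · rfl
  rw [hfz, hfz']
  have key : ((z * (a : ℂ) - z' * (b : ℂ)) * (starRingEnd ℂ z - starRingEnd ℂ z')).im =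
      (b - a) * (z * starRingEnd ℂ z').im := by
    simp [Complex.mul_im, Complex.mul_re, Complex.sub_im, Complex.sub_re]
    ring
  rw [key, abs_mul]
  rcases le_total (‖z'‖) (‖z‖) with h | h
  · simpa [ha, hb] using aux_log_lip z z' h
  · have := aux_log_lip z' z h
    have him : |(z' * starRingEnd ℂ z).im| = |(z * starRingEnd ℂ z').im| := by
      rw [← abs_neg]
      congr 1
      simp [Complex.mul_im]; ring
    rw [him, abs_sub_comm] at this
    calc |b - a| * |(z * starRingEnd ℂ z').im| ≤ 4 * ‖z' - z‖ ^ 2 := by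
          simpa [ha, hb, abs_sub_comm] using this
      _ = 4 * ‖z - z'‖ ^ 2 := by
          rw [show z' - z = -(z - z') from by ring, norm_neg]
end

section
/- For all complex numbers z and z' and every real δ > 0, one has |Im((z·log(δ + |z|²) − z'·log(δ + |z'|²))·(conj(z) − conj(z')))| ≤ 4·|z − z'|². -/
lemma log_diff_le_aux (δ m M : ℝ) (hδ : 0 < δ) (hm : 0 < m) (hmM : m ≤ M) :
    Real.log (δ + M ^ 2) - Real.log (δ + m ^ 2) ≤ 2 * (M - m) / m := by
  have h1 : (0:ℝ) < δ + m ^ 2 := by positivity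
  have h2 : (0:ℝ) < δ + M ^ 2 := by positivity
  have hs1 : Real.sqrt (δ + m ^ 2) ≥ m := by
    rw [ge_iff_le, Real.le_sqrt hm.le h1.le]; linarith
  have hs2 : Real.sqrt (δ + M ^ 2) ≤ Real.sqrt (δ + m ^ 2) + (M - m) := by
    rw [Real.sqrt_le_iff]
    constructor
    · nlinarith [Real.sqrt_nonneg (δ + m ^ 2)]
    · have := Real.sq_sqrt h1.le
      nlinarith [Real.sqrt_nonneg (δ + m ^ 2)]
  have hlog : Real.log ((δ + M ^ 2) / (δ + m ^ 2)) =
      Real.log (δ + M ^ 2) - Real.log (δ + m ^ 2) := Real.log_div h2.ne' h1.ne'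
  rw [← hlog]
  have hrpos : (0:ℝ) < (δ + M ^ 2) / (δ + m ^ 2) := by positivity
  have hsqrt : Real.log ((δ + M ^ 2) / (δ + m ^ 2)) =
      2 * Real.log (Real.sqrt ((δ + M ^ 2) / (δ + m ^ 2))) := by
    rw [Real.log_sqrt hrpos.le]; ring
  rw [hsqrt, Real.sqrt_div h2.le]
  have hring : 2 * (M - m) / m = 2 * ((M - m) / m) := by ring
  rw [hring]
  have hle : Real.log (Real.sqrt (δ + M ^ 2) / Real.sqrt (δ + m ^ 2)) ≤
      Real.sqrt (δ + M ^ 2) / Real.sqrt (δ + m ^ 2) - 1 :=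
    Real.log_le_sub_one_of_pos (by positivity)
  have hsm : (0:ℝ) < Real.sqrt (δ + m ^ 2) := lt_of_lt_of_le hm hs1
  have hstep : Real.sqrt (δ + M ^ 2) / Real.sqrt (δ + m ^ 2) - 1 ≤ (M - m) / m := by
    rw [div_sub_one hsm.ne', div_le_div_iff₀ hsm (by exact hm)]
    have hMm : 0 ≤ M - m := by linarith
    nlinarith
  linarith

theorem log_nonlinearity_lipschitz_im_reg (δ : ℝ) (hδ : 0 < δ) (z z' : ℂ) :
    |((z * Real.log (δ + ‖z‖ ^ 2) - z' * Real.log (δ + ‖z'‖ ^ 2)) *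
        (starRingEnd ℂ z - starRingEnd ℂ z')).im| ≤ 4 * ‖z - z'‖ ^ 2 := by
  wlog hzz : ‖z'‖ ≤ ‖z‖ with H
  · have h := H δ hδ z' z (le_of_not_ge hzz)
    have e1 : (z' * (Real.log (δ + ‖z'‖ ^ 2) : ℂ) -
          z * (Real.log (δ + ‖z‖ ^ 2) : ℂ)) * (starRingEnd ℂ z' - starRingEnd ℂ z) =
        (z * (Real.log (δ + ‖z‖ ^ 2) : ℂ) -
          z' * (Real.log (δ + ‖z'‖ ^ 2) : ℂ)) * (starRingEnd ℂ z - starRingEnd ℂ z') := by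
      ring
    rw [e1, norm_sub_rev z' z] at h
    exact h
  set a := Real.log (δ + ‖z‖ ^ 2) with ha
  set b := Real.log (δ + ‖z'‖ ^ 2) with hb
  set w := z - z' with hw
  -- the key algebraic identity
  have him : ((z * (a:ℂ) - z' * (b:ℂ)) * (starRingEnd ℂ z - starRingEnd ℂ z')).im =
      (a - b) * (z' * starRingEnd ℂ w).im := by
    simp only [hw, Complex.mul_im, Complex.mul_re, Complex.sub_im, Complex.sub_re,
      Complex.conj_re, Complex.conj_im, Complex.ofReal_re, Complex.ofReal_im]
    ring
  rw [him, abs_mul]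
  have him2 : |(z' * starRingEnd ℂ w).im| ≤ ‖z'‖ * ‖w‖ := by
    calc |(z' * starRingEnd ℂ w).im| ≤ ‖z' * starRingEnd ℂ w‖ :=
          Complex.abs_im_le_norm _
      _ = ‖z'‖ * ‖w‖ := by rw [norm_mul, Complex.norm_conj]
  have hab : 0 ≤ a - b := by
    have : δ + ‖z'‖ ^ 2 ≤ δ + ‖z‖ ^ 2 := by
      nlinarith [norm_nonneg z', norm_nonneg z]
    have := Real.log_le_log (by positivity) this
    linarith
  rcases eq_or_lt_of_le (norm_nonneg z') with hz0 | hz0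
  · -- z' = 0
    have : z' = 0 := by
      rwa [eq_comm, norm_eq_zero] at hz0
    simp [this]
  · -- z' ≠ 0
    have hkey : a - b ≤ 2 * (‖z‖ - ‖z'‖) / ‖z'‖ :=
      log_diff_le_aux δ _ _ hδ hz0 hzz
    have hMm : ‖z‖ - ‖z'‖ ≤ ‖w‖ :=
      le_trans (le_abs_self _) (abs_norm_sub_norm_le z z')
    have h1 : |a - b| * |(z' * starRingEnd ℂ w).im| ≤
        (2 * (‖z‖ - ‖z'‖) / ‖z'‖) *
          (‖z'‖ * ‖w‖) := by
      apply mul_le_mul (by rwa [abs_of_nonneg hab]) him2 (abs_nonneg _)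
      exact div_nonneg (by linarith) hz0.le
    have h2 : (2 * (‖z‖ - ‖z'‖) / ‖z'‖) *
        (‖z'‖ * ‖w‖) =
        2 * (‖z‖ - ‖z'‖) * ‖w‖ := by
      field_simp
    rw [h2] at h1
    have hwnn := norm_nonneg w
    nlinarith
end

section
/- Let d ≥ 1, μ ≥ 0, μ₀ > μ, and η ∈ (0, 2(μ₀−μ)/(d/2+μ₀)). Then there exists a constant C > 0, depending only on d, μ, μ₀, η, such that for every measurable u : ℝ^d → ℂ with finite L² norm and finite weighted norm ‖u‖_{L²_{μ₀}} := (∫ ⟨x⟩^{2μ₀}|u|²)^{1/2}, one has ∫_{ℝ^d} ⟨x⟩^{2μ} |u(x)|^{2−η} dx ≤ C · ‖u‖_{L²_{μ₀}}^{2μ/μ₀ + dη/(2μ₀)} · ‖u‖_{L²}^{2−η−2μ/μ₀−dη/(2μ₀)}. -/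
open MeasureTheory Real Set ENNReal Metric



lemma meas_aux (e : ℝ) : Measurable (fun y : EuclideanSpace ℝ (Fin d) => ENNReal.ofReal ((‖y‖^2)^e)) :=
  by fun_prop

lemma tail_scaling (d : ℕ) (e : ℝ) {ρ : ℝ} (hρ : 0 < ρ) :
    ∫⁻ x : EuclideanSpace ℝ (Fin d) in {x | ρ < ‖x‖}, ENNReal.ofReal ((‖x‖ ^ 2) ^ e) =
      ENNReal.ofReal (ρ ^ (2 * e + d)) *
        ∫⁻ y : EuclideanSpace ℝ (Fin d) in {y | 1 < ‖y‖}, ENNReal.ofReal ((‖y‖ ^ 2) ^ e) := by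
  have hρ' : (0:ℝ) < ρ⁻¹ := inv_pos.2 hρ
  set g : EuclideanSpace ℝ (Fin d) → ℝ≥0∞ :=
    ({y : EuclideanSpace ℝ (Fin d) | 1 < ‖y‖}).indicator
      (fun y => ENNReal.ofReal ((‖y‖^2)^e)) with hg
  have ms1 : MeasurableSet {y : EuclideanSpace ℝ (Fin d) | 1 < ‖y‖} :=
    measurableSet_lt measurable_const measurable_norm
  have ms2 : MeasurableSet {x : EuclideanSpace ℝ (Fin d) | ρ < ‖x‖} :=
    measurableSet_lt measurable_const measurable_norm
  have hgm : Measurable g := (meas_aux e).indicator ms1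
  have hmap : Measure.map (fun x : EuclideanSpace ℝ (Fin d) => ρ⁻¹ • x) volume
      = ENNReal.ofReal (ρ ^ d) • volume := by
    rw [Measure.map_addHaar_smul volume (ne_of_gt hρ')]
    congr 1
    rw [finrank_euclideanSpace_fin, inv_pow, inv_inv, abs_of_pos (pow_pos hρ _)]
  set κ : ℝ := ((ρ⁻¹)^2)^e with hκdef
  have hκ : 0 < κ := rpow_pos_of_pos (pow_pos hρ' 2) e
  have key : ∀ x : EuclideanSpace ℝ (Fin d), g (ρ⁻¹ • x) =
      ({x : EuclideanSpace ℝ (Fin d) | ρ < ‖x‖}).indicator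
        (fun x => ENNReal.ofReal κ * ENNReal.ofReal ((‖x‖^2)^e)) x := by
    intro x
    have hne : ‖ρ⁻¹ • x‖ = ρ⁻¹ * ‖x‖ := by
      rw [norm_smul, Real.norm_eq_abs, abs_of_pos hρ']
    have hmem : (1:ℝ) < ‖ρ⁻¹ • x‖ ↔ ρ < ‖x‖ := by
      rw [hne, show (1:ℝ) = ρ⁻¹ * ρ by field_simp, mul_lt_mul_iff_right₀ hρ']
    have hval : ENNReal.ofReal ((‖ρ⁻¹ • x‖^2)^e) =
        ENNReal.ofReal κ * ENNReal.ofReal ((‖x‖^2)^e) := by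
      rw [hne, mul_pow, Real.mul_rpow (sq_nonneg _) (sq_nonneg _),
        ENNReal.ofReal_mul hκ.le]
    by_cases h : ρ < ‖x‖
    · simp only [hg, Set.indicator, mem_setOf_eq, hmem, h, if_true, hval]
    · simp only [hg, Set.indicator, mem_setOf_eq, hmem, h, if_false]
  have h1 : ENNReal.ofReal (ρ ^ d) * ∫⁻ y, g y =
      ∫⁻ x : EuclideanSpace ℝ (Fin d), g (ρ⁻¹ • x) := by
    rw [← smul_eq_mul, ← lintegral_smul_measure, ← hmap, lintegral_map hgm (measurable_const_smul _)]
  have h2 : ∫⁻ x : EuclideanSpace ℝ (Fin d), g (ρ⁻¹ • x) =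
      ENNReal.ofReal κ * ∫⁻ x : EuclideanSpace ℝ (Fin d) in {x | ρ < ‖x‖},
        ENNReal.ofReal ((‖x‖^2)^e) := by
    simp_rw [key]
    rw [lintegral_indicator ms2, lintegral_const_mul _ (meas_aux e)]
  have h3 : ∫⁻ y, g y = ∫⁻ y : EuclideanSpace ℝ (Fin d) in {y | 1 < ‖y‖},
      ENNReal.ofReal ((‖y‖^2)^e) := lintegral_indicator ms1 _
  have hX : ENNReal.ofReal κ * ∫⁻ x : EuclideanSpace ℝ (Fin d) in {x | ρ < ‖x‖},
      ENNReal.ofReal ((‖x‖^2)^e) = ENNReal.ofReal (ρ ^ d) *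
      ∫⁻ y : EuclideanSpace ℝ (Fin d) in {y | 1 < ‖y‖}, ENNReal.ofReal ((‖y‖^2)^e) := by
    rw [← h2, ← h1, h3]
  have hκ0 : ENNReal.ofReal κ ≠ 0 := by simp [hκ, ENNReal.ofReal_eq_zero, not_le]
  have hκt : ENNReal.ofReal κ ≠ ⊤ := ENNReal.ofReal_ne_top
  have hfac : (ENNReal.ofReal κ)⁻¹ * ENNReal.ofReal (ρ ^ d) = ENNReal.ofReal (ρ ^ (2*e+d)) := by
    rw [← ENNReal.ofReal_inv_of_pos hκ, ← ENNReal.ofReal_mul (inv_nonneg.2 hκ.le)]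
    congr 1
    have hκ' : κ⁻¹ = ρ ^ (2*e) := by
      rw [hκdef, inv_pow, Real.inv_rpow (sq_nonneg _), inv_inv,
        ← Real.rpow_natCast ρ 2, ← Real.rpow_mul hρ.le]
      norm_num [mul_comm]
    rw [hκ', ← Real.rpow_natCast ρ d, ← Real.rpow_add hρ]
  calc ∫⁻ x : EuclideanSpace ℝ (Fin d) in {x | ρ < ‖x‖}, ENNReal.ofReal ((‖x‖^2)^e)
      = (ENNReal.ofReal κ)⁻¹ * (ENNReal.ofReal κ *
        ∫⁻ x : EuclideanSpace ℝ (Fin d) in {x | ρ < ‖x‖}, ENNReal.ofReal ((‖x‖^2)^e)) := by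
        rw [← mul_assoc, ENNReal.inv_mul_cancel hκ0 hκt, one_mul]
    _ = (ENNReal.ofReal κ)⁻¹ * (ENNReal.ofReal (ρ ^ d) *
        ∫⁻ y : EuclideanSpace ℝ (Fin d) in {y | 1 < ‖y‖}, ENNReal.ofReal ((‖y‖^2)^e)) := by
        rw [hX]
    _ = _ := by rw [← mul_assoc, hfac]

lemma integrable_weight (d : ℕ) (e : ℝ) (he : (d:ℝ) < -(2*e)) :
    Integrable (fun x : EuclideanSpace ℝ (Fin d) => ((1:ℝ) + ‖x‖^2) ^ e) := by
  have h := integrable_rpow_neg_one_add_norm_sq (E := EuclideanSpace ℝ (Fin d))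
    (μ := volume) (r := -(2*e)) (by rw [finrank_euclideanSpace_fin]; exact he)
  have he' : -(-(2*e))/2 = e := by ring
  simpa [he'] using h

lemma J_ne_top (d : ℕ) (hd : 1 ≤ d) (e : ℝ) (he : e < -((d:ℝ)/2)) :
    ∫⁻ y : EuclideanSpace ℝ (Fin d) in {y | 1 < ‖y‖},
      ENNReal.ofReal ((‖y‖^2)^e) ≠ ⊤ := by
  have hd' : (1:ℝ) ≤ d := by exact_mod_cast hd
  have he0 : e < 0 := by linarith
  have hInt := integrable_weight d e (by linarith)
  have hpt : ∀ y : EuclideanSpace ℝ (Fin d), y ∈ {y : EuclideanSpace ℝ (Fin d) | 1 < ‖y‖} →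
      ENNReal.ofReal ((‖y‖^2)^e) ≤ ENNReal.ofReal (2^(-e) * ((1:ℝ) + ‖y‖^2)^e) := by
    intro y hy
    apply ENNReal.ofReal_le_ofReal
    have h1 : (1:ℝ) < ‖y‖ := hy
    have h2 : ((1:ℝ) + ‖y‖^2)/2 ≤ ‖y‖^2 := by nlinarith
    have h3 : (0:ℝ) < (1 + ‖y‖^2)/2 := by nlinarith
    calc (‖y‖^2)^e ≤ (((1:ℝ) + ‖y‖^2)/2)^e := rpow_le_rpow_of_nonpos h3 h2 he0.le
      _ = 2^(-e) * ((1:ℝ) + ‖y‖^2)^e := by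
          rw [Real.div_rpow (by positivity) (by norm_num), Real.rpow_neg (by norm_num)]
          ring
  have hle : ∫⁻ y : EuclideanSpace ℝ (Fin d) in {y | 1 < ‖y‖},
      ENNReal.ofReal ((‖y‖^2)^e) ≤
      ∫⁻ y : EuclideanSpace ℝ (Fin d), ENNReal.ofReal (2^(-e) * ((1:ℝ) + ‖y‖^2)^e) := by
    refine le_trans (setLIntegral_mono (by fun_prop) hpt) (setLIntegral_le_lintegral _ _)
  refine ne_of_lt (lt_of_le_of_lt hle ?_)
  exact (hInt.const_mul _).lintegral_lt_top

lemma tail_bound (d : ℕ) (hd : 1 ≤ d) (e : ℝ) (he : e < -((d:ℝ)/2)) :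
    ∃ c : ℝ, 0 < c ∧ ∀ T : ℝ, 1 ≤ T →
      ∫⁻ x : EuclideanSpace ℝ (Fin d) in {x | T < 1 + ‖x‖^2},
        ENNReal.ofReal (((1:ℝ) + ‖x‖^2) ^ e) ≤ ENNReal.ofReal (c * T ^ (e + d/2)) := by
  have hd' : (1:ℝ) ≤ d := by exact_mod_cast hd
  have he0 : e < 0 := by linarith
  set a : ℝ := e + d/2 with ha
  have ha0 : a < 0 := by simp [ha]; linarith
  have hInt := integrable_weight d e (by linarith)
  set c₀ : ℝ := ∫ x : EuclideanSpace ℝ (Fin d), ((1:ℝ) + ‖x‖^2)^e with hc₀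
  have hc₀0 : 0 ≤ c₀ := integral_nonneg (fun x => rpow_nonneg (by positivity) _)
  have hItot : ∫⁻ x : EuclideanSpace ℝ (Fin d), ENNReal.ofReal (((1:ℝ) + ‖x‖^2)^e)
      = ENNReal.ofReal c₀ :=
    (ofReal_integral_eq_lintegral_ofReal hInt
      (ae_of_all _ (fun x => rpow_nonneg (by positivity) _))).symm
  set J := ∫⁻ y : EuclideanSpace ℝ (Fin d) in {y | 1 < ‖y‖}, ENNReal.ofReal ((‖y‖^2)^e)
    with hJdef
  have hJ : J ≠ ⊤ := J_ne_top d hd e he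
  set cJ : ℝ := J.toReal with hcJ
  have hcJ0 : 0 ≤ cJ := ENNReal.toReal_nonneg
  have hJeq : J = ENNReal.ofReal cJ := (ENNReal.ofReal_toReal hJ).symm
  refine ⟨(c₀ + cJ) * 2^(-a) + 1, by positivity, fun T hT => ?_⟩
  have hT0 : (0:ℝ) < T := by linarith
  have hTa : (0:ℝ) < T ^ a := rpow_pos_of_pos hT0 a
  have h2a : (2:ℝ)^(-a) * 2^a = 1 := by
    rw [← Real.rpow_add (by norm_num)]; simp
  rcases le_or_gt T 2 with hT2 | hT2
  · -- T ≤ 2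
    have hb : ∫⁻ x : EuclideanSpace ℝ (Fin d) in {x | T < 1 + ‖x‖^2},
        ENNReal.ofReal (((1:ℝ) + ‖x‖^2) ^ e) ≤ ENNReal.ofReal c₀ := by
      rw [← hItot]; exact setLIntegral_le_lintegral _ _
    refine hb.trans (ENNReal.ofReal_le_ofReal ?_)
    have h2T : (2:ℝ)^a ≤ T^a := rpow_le_rpow_of_nonpos hT0 hT2 ha0.le
    have hkey : (c₀ + cJ) * 2^(-a) * T^a ≥ c₀ := by
      have h1 : (c₀ + cJ) * 2^(-a) * 2^a ≤ (c₀ + cJ) * 2^(-a) * T^a := by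
        apply mul_le_mul_of_nonneg_left h2T (by positivity)
      have h2 : (c₀ + cJ) * 2^(-a) * 2^a = c₀ + cJ := by
        rw [mul_assoc, h2a, mul_one]
      linarith
    nlinarith
  · -- 2 < T
    have hsub : {x : EuclideanSpace ℝ (Fin d) | T < 1 + ‖x‖^2} ⊆
        {x : EuclideanSpace ℝ (Fin d) | Real.sqrt (T/2) < ‖x‖} := by
      intro x hx
      have hx' : T < 1 + ‖x‖^2 := hx
      have hn0 : 0 < ‖x‖ := by
        by_contra h
        push_neg at h
        have : ‖x‖ = 0 := le_antisymm h (norm_nonneg _)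
        rw [this] at hx'; norm_num at hx'; linarith
      have : T/2 < ‖x‖^2 := by nlinarith
      exact (Real.sqrt_lt' hn0).2 this
    have hpt : ∀ x : EuclideanSpace ℝ (Fin d),
        x ∈ {x : EuclideanSpace ℝ (Fin d) | T < 1 + ‖x‖^2} →
        ENNReal.ofReal (((1:ℝ) + ‖x‖^2)^e) ≤ ENNReal.ofReal ((‖x‖^2)^e) := by
      intro x hx
      have hx' : T < 1 + ‖x‖^2 := hx
      have hn0 : (0:ℝ) < ‖x‖^2 := by nlinarith
      exact ENNReal.ofReal_le_ofReal
        (rpow_le_rpow_of_nonpos hn0 (by linarith) he0.le)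
    have hρ : (0:ℝ) < Real.sqrt (T/2) := Real.sqrt_pos.2 (by linarith)
    have hstep : ∫⁻ x : EuclideanSpace ℝ (Fin d) in {x | T < 1 + ‖x‖^2},
        ENNReal.ofReal (((1:ℝ) + ‖x‖^2)^e) ≤
        ∫⁻ x : EuclideanSpace ℝ (Fin d) in {x | Real.sqrt (T/2) < ‖x‖},
          ENNReal.ofReal ((‖x‖^2)^e) :=
      le_trans (setLIntegral_mono (by fun_prop) hpt) (lintegral_mono_set hsub)
    rw [tail_scaling d e hρ, ← hJdef, hJeq, ← ENNReal.ofReal_mul (by positivity)] at hstep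
    refine hstep.trans (ENNReal.ofReal_le_ofReal ?_)
    have hρ2 : Real.sqrt (T/2) ^ (2*e + (d:ℝ)) = (T/2) ^ a := by
      rw [Real.sqrt_eq_rpow, ← Real.rpow_mul (by linarith)]
      congr 1
      simp [ha]; ring
    rw [hρ2, Real.div_rpow (by linarith) (by norm_num), div_eq_mul_inv,
      ← Real.rpow_neg (by norm_num : (0:ℝ) ≤ 2)]
    calc T^a * 2^(-a) * cJ = cJ * 2^(-a) * T^a := by ring
      _ ≤ ((c₀ + cJ) * 2^(-a) + 1) * T^a := by
          apply mul_le_mul_of_nonneg_right _ hTa.le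
          nlinarith [Real.rpow_pos_of_pos (by norm_num : (0:ℝ) < 2) (-a)]

set_option maxHeartbeats 1000000 in
theorem weighted_interpolation_estimate (d : ℕ) (hd : 1 ≤ d)
    (μ μ₀ : ℝ) (hμ : 0 ≤ μ) (hμ₀ : μ < μ₀)
    (η : ℝ) (hη : 0 < η) (hη' : η < 2 * (μ₀ - μ) / (d / 2 + μ₀)) :
    ∃ C : ℝ, 0 < C ∧ ∀ u : EuclideanSpace ℝ (Fin d) → ℂ, Measurable u →
      Integrable (fun x => ‖u x‖ ^ 2) →
      Integrable (fun x => ((1 : ℝ) + ‖x‖ ^ 2) ^ μ₀ * ‖u x‖ ^ 2) →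
      ∫ x, ((1 : ℝ) + ‖x‖ ^ 2) ^ μ * ‖u x‖ ^ ((2 : ℝ) - η) ≤
        C * ((∫ x, ((1 : ℝ) + ‖x‖ ^ 2) ^ μ₀ * ‖u x‖ ^ 2) ^ ((1 : ℝ) / 2))
              ^ (2 * μ / μ₀ + d * η / (2 * μ₀)) *
            ((∫ x, ‖u x‖ ^ 2) ^ ((1 : ℝ) / 2))
              ^ (2 - η - 2 * μ / μ₀ - d * η / (2 * μ₀)) := by
  have hμ₀0 : 0 < μ₀ := lt_of_le_of_lt hμ hμ₀
  have hd' : (1:ℝ) ≤ d := by exact_mod_cast hd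
  have hdenom : (0:ℝ) < (d:ℝ)/2 + μ₀ := by positivity
  have hkey : η * ((d:ℝ)/2 + μ₀) < 2*(μ₀ - μ) := by
    rw [lt_div_iff₀ hdenom] at hη'
    exact hη'
  have hη2 : η < 2 := by nlinarith
  have h2η : (0:ℝ) < 2 - η := by linarith
  set p : ℝ := 2/(2-η) with hp
  set q : ℝ := 2/η with hq
  have hp0 : 0 < p := by positivity
  have hq0 : 0 < q := by positivity
  have hpq : p.HolderConjugate q := by
    rw [Real.holderConjugate_iff]; constructor
    · rw [hp, lt_div_iff₀ h2η]; linarith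
    · rw [hp, hq, inv_div, inv_div]; ring
  set e : ℝ := (2*μ - (2-η)*μ₀)/η with he_def
  have he : e < -((d:ℝ)/2) := by
    rw [he_def, div_lt_iff₀ hη]; nlinarith
  set θ : ℝ := (μ + (d:ℝ)*η/4)/μ₀ with hθ
  set σ : ℝ := (2-η)/2 - θ with hσ
  have hθpos : 0 < θ := by
    apply div_pos _ hμ₀0; nlinarith
  have hσpos : 0 < σ := by
    rw [hσ, hθ, sub_pos, div_lt_iff₀ hμ₀0]; nlinarith
  obtain ⟨c₂, hc₂, htail⟩ := tail_bound d hd e he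
  set KB : ℝ := (volume (Metric.ball (0 : EuclideanSpace ℝ (Fin d)) 1)).toReal with hKBdef
  have hKB0 : 0 ≤ KB := ENNReal.toReal_nonneg
  have hVfin : volume (Metric.ball (0 : EuclideanSpace ℝ (Fin d)) 1) ≠ ⊤ :=
    measure_ball_lt_top.ne
  refine ⟨KB^(η/2) + c₂^(η/2) + 1, by positivity, fun u hu hIBint hIAint => ?_⟩
  have hfm : Measurable (fun x => ‖u x‖) := by
    exact hu.norm
  have hf0 : ∀ x, 0 ≤ ‖u x‖ := fun x => norm_nonneg _
  set IA : ℝ := ∫ x : EuclideanSpace ℝ (Fin d), ((1:ℝ)+‖x‖^2)^μ₀ * ‖u x‖^2 with hIAdef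
  set IB : ℝ := ∫ x : EuclideanSpace ℝ (Fin d), ‖u x‖^2 with hIBdef
  have hIA0 : 0 ≤ IA := integral_nonneg (fun x => by positivity)
  have hIB0 : 0 ≤ IB := integral_nonneg (fun x => by positivity)
  have hexp1 : (IA^((1:ℝ)/2))^(2*μ/μ₀ + (d:ℝ)*η/(2*μ₀)) = IA^θ := by
    rw [← Real.rpow_mul hIA0]
    congr 1
    rw [hθ]; field_simp; ring
  have hexp2 : (IB^((1:ℝ)/2))^(2 - η - 2*μ/μ₀ - (d:ℝ)*η/(2*μ₀)) = IB^σ := by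
    rw [← Real.rpow_mul hIB0]
    congr 1
    rw [hσ, hθ]; field_simp; ring
  rw [hexp1, hexp2]
  have hX0 : 0 ≤ IA^θ * IB^σ :=
    mul_nonneg (Real.rpow_nonneg hIA0 _) (Real.rpow_nonneg hIB0 _)
  by_cases hIBz : IB = 0
  · -- degenerate case
    have hae : (fun x : EuclideanSpace ℝ (Fin d) => ‖u x‖^2) =ᵐ[volume] 0 :=
      (integral_eq_zero_iff_of_nonneg (fun x => by positivity) hIBint).1 hIBz
    have hae2 : (fun x : EuclideanSpace ℝ (Fin d) =>
        ((1:ℝ)+‖x‖^2)^μ * ‖u x‖^((2:ℝ)-η)) =ᵐ[volume] 0 := by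
      filter_upwards [hae] with x hx
      have hx' : ‖u x‖ = 0 := by
        have : ‖u x‖^2 = 0 := hx
        exact pow_eq_zero_iff (n := 2) (by norm_num) |>.1 this
      simp [hx', Real.zero_rpow (ne_of_gt h2η)]
    rw [integral_congr_ae hae2]
    simp only [Pi.zero_apply, integral_zero]
    have : (0:ℝ) ≤ (KB^(η/2) + c₂^(η/2) + 1) * IA^θ * IB^σ :=
      mul_nonneg (mul_nonneg (by positivity) (Real.rpow_nonneg hIA0 _))
        (Real.rpow_nonneg hIB0 _)
    linarith
  · -- main case
    have hIBpos : 0 < IB := lt_of_le_of_ne hIB0 (Ne.symm hIBz)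
    have hAB : IB ≤ IA := by
      apply integral_mono hIBint hIAint
      intro x
      have h1 : (1:ℝ) ≤ ((1:ℝ)+‖x‖^2)^μ₀ := by
        calc (1:ℝ) = 1 ^ μ₀ := (Real.one_rpow μ₀).symm
          _ ≤ ((1:ℝ)+‖x‖^2)^μ₀ :=
            Real.rpow_le_rpow zero_le_one (by nlinarith [sq_nonneg ‖x‖]) hμ₀0.le
      simpa using le_mul_of_one_le_left (by positivity) h1
    have hIApos : 0 < IA := lt_of_lt_of_le hIBpos hAB
    set T : ℝ := (IA/IB)^(μ₀⁻¹) with hTdef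
    have hT1 : 1 ≤ T := by
      rw [hTdef]
      calc (1:ℝ) = 1 ^ μ₀⁻¹ := (Real.one_rpow _).symm
        _ ≤ (IA/IB)^μ₀⁻¹ :=
          Real.rpow_le_rpow zero_le_one ((one_le_div hIBpos).2 hAB) (inv_nonneg.2 hμ₀0.le)
    have hT0 : 0 < T := lt_of_lt_of_le one_pos hT1
    have hTpow : ∀ r : ℝ, T ^ r = IA^(r/μ₀) / IB^(r/μ₀) := by
      intro r
      rw [hTdef, ← Real.rpow_mul (by positivity), inv_mul_eq_div, Real.div_rpow hIA0 hIB0]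
    set s : Set (EuclideanSpace ℝ (Fin d)) := {x | 1 + ‖x‖^2 ≤ T} with hsdef
    have hs : MeasurableSet s :=
      measurableSet_le (measurable_const.add (measurable_norm.pow_const 2)) measurable_const
    have hscompl : sᶜ = {x : EuclideanSpace ℝ (Fin d) | T < 1 + ‖x‖^2} := by
      ext x; simp [hsdef, not_le]
    have hnnae : 0 ≤ᵐ[volume] fun x : EuclideanSpace ℝ (Fin d) =>
        ((1:ℝ)+‖x‖^2)^μ * ‖u x‖^((2:ℝ)-η) :=
      ae_of_all _ fun x => by positivity
    have hsm : AEStronglyMeasurable (fun x : EuclideanSpace ℝ (Fin d) =>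
        ((1:ℝ)+‖x‖^2)^μ * ‖u x‖^((2:ℝ)-η)) volume := by
      apply Measurable.aestronglyMeasurable; fun_prop
    rw [integral_eq_lintegral_of_nonneg_ae hnnae hsm]
    have hRHS0 : (0:ℝ) ≤ (KB^(η/2) + c₂^(η/2) + 1) * IA^θ * IB^σ :=
      mul_nonneg (mul_nonneg (by positivity) (Real.rpow_nonneg hIA0 _))
        (Real.rpow_nonneg hIB0 _)
    apply ENNReal.toReal_le_of_le_ofReal hRHS0
    rw [← lintegral_add_compl (fun x : EuclideanSpace ℝ (Fin d) =>
      ENNReal.ofReal (((1:ℝ)+‖x‖^2)^μ * ‖u x‖^((2:ℝ)-η))) hs]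
    -- lintegral forms of IA and IB
    have hlinIB : ∫⁻ x : EuclideanSpace ℝ (Fin d), ENNReal.ofReal (‖u x‖^2)
        = ENNReal.ofReal IB :=
      (ofReal_integral_eq_lintegral_ofReal hIBint (ae_of_all _ fun x => by positivity)).symm
    have hlinIA : ∫⁻ x : EuclideanSpace ℝ (Fin d),
        ENNReal.ofReal (((1:ℝ)+‖x‖^2)^μ₀ * ‖u x‖^2) = ENNReal.ofReal IA :=
      (ofReal_integral_eq_lintegral_ofReal hIAint (ae_of_all _ fun x => by positivity)).symm
    have hinvp : 1/p = (2-η)/2 := by rw [hp, one_div_div]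
    have hinvq : 1/q = η/2 := by rw [hq, one_div_div]
    -- Inner estimate
    have hI1 : (∫⁻ x in s, ENNReal.ofReal (((1:ℝ)+‖x‖^2)^μ * ‖u x‖^((2:ℝ)-η)))
        ≤ ENNReal.ofReal (KB^(η/2) * (IA^θ * IB^σ)) := by
      set G1 : EuclideanSpace ℝ (Fin d) → ℝ≥0∞ :=
        fun x => ENNReal.ofReal (‖u x‖^((2:ℝ)-η)) with hG1
      set G2 : EuclideanSpace ℝ (Fin d) → ℝ≥0∞ :=
        fun x => ENNReal.ofReal (((1:ℝ)+‖x‖^2)^μ) with hG2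
      have hfac : ∀ x, ENNReal.ofReal (((1:ℝ)+‖x‖^2)^μ * ‖u x‖^((2:ℝ)-η))
          = (G1 * G2) x := by
        intro x
        simp only [hG1, hG2, Pi.mul_apply]
        rw [← ENNReal.ofReal_mul (by positivity), mul_comm]
      have hG1m : Measurable G1 := by simp only [hG1]; fun_prop
      have hG2m : Measurable G2 := by simp only [hG2]; fun_prop
      have hHold := ENNReal.lintegral_mul_le_Lp_mul_Lq (volume.restrict s) hpq
        hG1m.aemeasurable hG2m.aemeasurable
      have hfirst : (∫⁻ x in s, G1 x ^ p) ^ (1/p) ≤ ENNReal.ofReal (IB^((2-η)/2)) := by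
        have hG1p : ∀ x, G1 x ^ p = ENNReal.ofReal (‖u x‖^2) := by
          intro x
          simp only [hG1]
          rw [ENNReal.ofReal_rpow_of_nonneg (by positivity) hp0.le]
          congr 1
          rw [← Real.rpow_natCast (‖u x‖) 2, ← Real.rpow_mul (hf0 x)]
          congr 1
          rw [hp]
          push_cast
          field_simp
        have h1 : (∫⁻ x in s, G1 x ^ p) ≤ ENNReal.ofReal IB := by
          calc (∫⁻ x in s, G1 x ^ p)
              = ∫⁻ x in s, ENNReal.ofReal (‖u x‖^2) := lintegral_congr hG1p
            _ ≤ ∫⁻ x, ENNReal.ofReal (‖u x‖^2) := setLIntegral_le_lintegral _ _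
            _ = ENNReal.ofReal IB := hlinIB
        calc (∫⁻ x in s, G1 x ^ p) ^ (1/p) ≤ (ENNReal.ofReal IB) ^ (1/p) :=
              ENNReal.rpow_le_rpow h1 (by positivity)
          _ = ENNReal.ofReal (IB^((2-η)/2)) := by
              rw [ENNReal.ofReal_rpow_of_nonneg hIB0 (by positivity), hinvp]
      have hsecond : (∫⁻ x in s, G2 x ^ q) ^ (1/q) ≤
          ENNReal.ofReal (T^(θ*μ₀) * KB^(η/2)) := by
        have hG2q : ∀ x ∈ s, G2 x ^ q ≤ ENNReal.ofReal (T^(μ*q)) := by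
          intro x hx
          have hx' : 1 + ‖x‖^2 ≤ T := hx
          simp only [hG2]
          rw [ENNReal.ofReal_rpow_of_nonneg (by positivity) hq0.le]
          apply ENNReal.ofReal_le_ofReal
          rw [← Real.rpow_mul (by positivity : (0:ℝ) ≤ 1+‖x‖^2)]
          exact Real.rpow_le_rpow (by positivity) hx' (by positivity)
        have hvol : volume s ≤ ENNReal.ofReal (T^((d:ℝ)/2)) * ENNReal.ofReal KB := by
          have hsub : s ⊆ Metric.closedBall 0 (Real.sqrt T) := by
            intro x hx
            have hx' : 1 + ‖x‖^2 ≤ T := hx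
            rw [Metric.mem_closedBall, dist_zero_right]
            calc ‖x‖ = Real.sqrt (‖x‖^2) := (Real.sqrt_sq (norm_nonneg x)).symm
              _ ≤ Real.sqrt T := Real.sqrt_le_sqrt (by nlinarith [sq_nonneg ‖x‖])
          calc volume s
              ≤ volume (Metric.closedBall (0 : EuclideanSpace ℝ (Fin d)) (Real.sqrt T)) :=
                measure_mono hsub
            _ = ENNReal.ofReal (Real.sqrt T ^ d) *
                volume (Metric.ball (0 : EuclideanSpace ℝ (Fin d)) 1) := by
                rw [Measure.addHaar_closedBall volume _ (Real.sqrt_nonneg T),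
                  finrank_euclideanSpace_fin]
            _ = ENNReal.ofReal (T^((d:ℝ)/2)) * ENNReal.ofReal KB := by
                congr 1
                · congr 1
                  rw [Real.sqrt_eq_rpow, ← Real.rpow_natCast (T^((1:ℝ)/2)) d,
                    ← Real.rpow_mul hT0.le]
                  congr 1
                  ring
                · exact (ENNReal.ofReal_toReal hVfin).symm
        have h2 : (∫⁻ x in s, G2 x ^ q) ≤ ENNReal.ofReal (T^(μ*q) * (T^((d:ℝ)/2) * KB)) := by
          calc (∫⁻ x in s, G2 x ^ q) ≤ ∫⁻ _x in s, ENNReal.ofReal (T^(μ*q)) :=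
                setLIntegral_mono measurable_const hG2q
            _ = ENNReal.ofReal (T^(μ*q)) * volume s := setLIntegral_const s _
            _ ≤ ENNReal.ofReal (T^(μ*q)) * (ENNReal.ofReal (T^((d:ℝ)/2)) * ENNReal.ofReal KB) := by
                exact mul_le_mul_right hvol _
            _ = ENNReal.ofReal (T^(μ*q) * (T^((d:ℝ)/2) * KB)) := by
                rw [← ENNReal.ofReal_mul (by positivity), ← ENNReal.ofReal_mul (by positivity)]
        calc (∫⁻ x in s, G2 x ^ q) ^ (1/q)
            ≤ (ENNReal.ofReal (T^(μ*q) * (T^((d:ℝ)/2) * KB))) ^ (1/q) :=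
              ENNReal.rpow_le_rpow h2 (by positivity)
          _ = ENNReal.ofReal ((T^(μ*q) * (T^((d:ℝ)/2) * KB))^(η/2)) := by
              rw [ENNReal.ofReal_rpow_of_nonneg (by positivity) (by positivity), hinvq]
          _ = ENNReal.ofReal (T^(θ*μ₀) * KB^(η/2)) := by
              congr 1
              rw [show T^(μ*q) * (T^((d:ℝ)/2) * KB) = T^(μ*q + (d:ℝ)/2) * KB by
                    rw [Real.rpow_add hT0]; ring,
                Real.mul_rpow (Real.rpow_nonneg hT0.le _) hKB0, ← Real.rpow_mul hT0.le]
              congr 2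
              rw [hq, hθ]
              field_simp
              ring
      calc (∫⁻ x in s, ENNReal.ofReal (((1:ℝ)+‖x‖^2)^μ * ‖u x‖^((2:ℝ)-η)))
          = ∫⁻ x in s, (G1 * G2) x := lintegral_congr hfac
        _ ≤ (∫⁻ x in s, G1 x ^ p)^(1/p) * (∫⁻ x in s, G2 x ^ q)^(1/q) := hHold
        _ ≤ ENNReal.ofReal (IB^((2-η)/2)) * ENNReal.ofReal (T^(θ*μ₀) * KB^(η/2)) :=
            mul_le_mul' hfirst hsecond
        _ = ENNReal.ofReal (IB^((2-η)/2) * (T^(θ*μ₀) * KB^(η/2))) :=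
            (ENNReal.ofReal_mul (by positivity)).symm
        _ = ENNReal.ofReal (KB^(η/2) * (IA^θ * IB^σ)) := by
            congr 1
            rw [hTpow, show θ*μ₀/μ₀ = θ by field_simp, hσ, Real.rpow_sub hIBpos]
            have hne1 : IB^θ ≠ 0 := ne_of_gt (Real.rpow_pos_of_pos hIBpos _)
            field_simp
    have hI2 : (∫⁻ x in sᶜ, ENNReal.ofReal (((1:ℝ)+‖x‖^2)^μ * ‖u x‖^((2:ℝ)-η)))
        ≤ ENNReal.ofReal (c₂^(η/2) * (IA^θ * IB^σ)) := by
      set e' : ℝ := μ - μ₀*((2-η)/2) with he'def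
      set H1 : EuclideanSpace ℝ (Fin d) → ℝ≥0∞ :=
        fun x => ENNReal.ofReal ((((1:ℝ)+‖x‖^2)^μ₀ * ‖u x‖^2)^((2-η)/2)) with hH1
      set H2 : EuclideanSpace ℝ (Fin d) → ℝ≥0∞ :=
        fun x => ENNReal.ofReal (((1:ℝ)+‖x‖^2)^e') with hH2
      have hfac2 : ∀ x, ENNReal.ofReal (((1:ℝ)+‖x‖^2)^μ * ‖u x‖^((2:ℝ)-η))
          = (H1 * H2) x := by
        intro x
        have hw : (0:ℝ) < 1+‖x‖^2 := by positivity
        simp only [hH1, hH2, Pi.mul_apply]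
        rw [← ENNReal.ofReal_mul (by positivity)]
        congr 1
        rw [Real.mul_rpow (Real.rpow_nonneg hw.le _) (by positivity),
          ← Real.rpow_natCast (‖u x‖) 2,
          ← Real.rpow_mul (hf0 x), ← Real.rpow_mul hw.le,
          show ((2:ℕ):ℝ)*((2-η)/2) = 2-η by push_cast; ring,
          mul_right_comm, ← Real.rpow_add hw,
          show μ₀*((2-η)/2) + e' = μ by rw [he'def]; ring]
      have hH1m : Measurable H1 := by simp only [hH1]; fun_prop
      have hH2m : Measurable H2 := by simp only [hH2]; fun_prop
      have hHold2 := ENNReal.lintegral_mul_le_Lp_mul_Lq (volume.restrict sᶜ) hpq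
        hH1m.aemeasurable hH2m.aemeasurable
      have hfirst : (∫⁻ x in sᶜ, H1 x ^ p) ^ (1/p) ≤ ENNReal.ofReal (IA^((2-η)/2)) := by
        have hH1p : ∀ x, H1 x ^ p
            = ENNReal.ofReal (((1:ℝ)+‖x‖^2)^μ₀ * ‖u x‖^2) := by
          intro x
          simp only [hH1]
          rw [ENNReal.ofReal_rpow_of_nonneg (by positivity) hp0.le]
          congr 1
          rw [← Real.rpow_mul (by positivity),
            show (2-η)/2 * p = 1 by rw [hp]; field_simp, Real.rpow_one]
        have h1 : (∫⁻ x in sᶜ, H1 x ^ p) ≤ ENNReal.ofReal IA := by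
          calc (∫⁻ x in sᶜ, H1 x ^ p)
              = ∫⁻ x in sᶜ, ENNReal.ofReal (((1:ℝ)+‖x‖^2)^μ₀ * ‖u x‖^2) :=
                lintegral_congr hH1p
            _ ≤ ∫⁻ x, ENNReal.ofReal (((1:ℝ)+‖x‖^2)^μ₀ * ‖u x‖^2) :=
                setLIntegral_le_lintegral _ _
            _ = ENNReal.ofReal IA := hlinIA
        calc (∫⁻ x in sᶜ, H1 x ^ p) ^ (1/p) ≤ (ENNReal.ofReal IA) ^ (1/p) :=
              ENNReal.rpow_le_rpow h1 (by positivity)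
          _ = ENNReal.ofReal (IA^((2-η)/2)) := by
              rw [ENNReal.ofReal_rpow_of_nonneg hIA0 (by positivity), hinvp]
      have hsecond : (∫⁻ x in sᶜ, H2 x ^ q) ^ (1/q) ≤
          ENNReal.ofReal (c₂^(η/2) * T^(-σ*μ₀)) := by
        have hH2q : ∀ x, H2 x ^ q = ENNReal.ofReal (((1:ℝ)+‖x‖^2)^e) := by
          intro x
          simp only [hH2]
          rw [ENNReal.ofReal_rpow_of_nonneg (by positivity) hq0.le]
          congr 1
          rw [← Real.rpow_mul (by positivity)]
          congr 1
          rw [he'def, hq, he_def]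
          field_simp
        have h2 : (∫⁻ x in sᶜ, H2 x ^ q) ≤ ENNReal.ofReal (c₂ * T^(e+(d:ℝ)/2)) := by
          calc (∫⁻ x in sᶜ, H2 x ^ q)
              = ∫⁻ x in sᶜ, ENNReal.ofReal (((1:ℝ)+‖x‖^2)^e) := lintegral_congr hH2q
            _ = ∫⁻ x in {x : EuclideanSpace ℝ (Fin d) | T < 1+‖x‖^2},
                ENNReal.ofReal (((1:ℝ)+‖x‖^2)^e) := by rw [hscompl]
            _ ≤ ENNReal.ofReal (c₂ * T^(e+(d:ℝ)/2)) := htail T hT1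
        calc (∫⁻ x in sᶜ, H2 x ^ q) ^ (1/q)
            ≤ (ENNReal.ofReal (c₂ * T^(e+(d:ℝ)/2))) ^ (1/q) :=
              ENNReal.rpow_le_rpow h2 (by positivity)
          _ = ENNReal.ofReal ((c₂ * T^(e+(d:ℝ)/2))^(η/2)) := by
              rw [ENNReal.ofReal_rpow_of_nonneg (by positivity) (by positivity), hinvq]
          _ = ENNReal.ofReal (c₂^(η/2) * T^(-σ*μ₀)) := by
              congr 1
              rw [Real.mul_rpow hc₂.le (Real.rpow_nonneg hT0.le _), ← Real.rpow_mul hT0.le]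
              congr 2
              rw [he_def, hσ, hθ]
              field_simp
              ring
      calc (∫⁻ x in sᶜ, ENNReal.ofReal (((1:ℝ)+‖x‖^2)^μ * ‖u x‖^((2:ℝ)-η)))
          = ∫⁻ x in sᶜ, (H1 * H2) x := lintegral_congr hfac2
        _ ≤ (∫⁻ x in sᶜ, H1 x ^ p)^(1/p) * (∫⁻ x in sᶜ, H2 x ^ q)^(1/q) := hHold2
        _ ≤ ENNReal.ofReal (IA^((2-η)/2)) * ENNReal.ofReal (c₂^(η/2) * T^(-σ*μ₀)) :=
            mul_le_mul' hfirst hsecond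
        _ = ENNReal.ofReal (IA^((2-η)/2) * (c₂^(η/2) * T^(-σ*μ₀))) :=
            (ENNReal.ofReal_mul (by positivity)).symm
        _ = ENNReal.ofReal (c₂^(η/2) * (IA^θ * IB^σ)) := by
            congr 1
            rw [hTpow, show -σ*μ₀/μ₀ = -σ by field_simp,
              Real.rpow_neg hIA0, Real.rpow_neg hIB0]
            have h3 : IA^((2-η)/2) = IA^θ * IA^σ := by
              rw [← Real.rpow_add hIApos]
              congr 1
              rw [hσ]
              ring
            have hne1 : IA^σ ≠ 0 := ne_of_gt (Real.rpow_pos_of_pos hIApos _)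
            have hne2 : IB^σ ≠ 0 := ne_of_gt (Real.rpow_pos_of_pos hIBpos _)
            rw [h3]
            field_simp
    calc (∫⁻ x in s, ENNReal.ofReal (((1:ℝ)+‖x‖^2)^μ * ‖u x‖^((2:ℝ)-η)))
          + (∫⁻ x in sᶜ, ENNReal.ofReal (((1:ℝ)+‖x‖^2)^μ * ‖u x‖^((2:ℝ)-η)))
        ≤ ENNReal.ofReal (KB^(η/2) * (IA^θ * IB^σ)) + ENNReal.ofReal (c₂^(η/2) * (IA^θ * IB^σ)) :=
          add_le_add hI1 hI2
      _ = ENNReal.ofReal (KB^(η/2) * (IA^θ * IB^σ) + c₂^(η/2) * (IA^θ * IB^σ)) :=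
          (ENNReal.ofReal_add (by positivity) (by positivity)).symm
      _ ≤ ENNReal.ofReal ((KB^(η/2) + c₂^(η/2) + 1) * IA^θ * IB^σ) := by
          apply ENNReal.ofReal_le_ofReal
          nlinarith [hX0]
end
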